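/- For every integer n ≥ 1, Λ_n = (1/2)·log(2π) + u_n, where u_n := (−1)^n·[ Σ_{m=1}^n (−1)^m·A_{nm}·log( |B_{2m}| / (2m−3)!! ) + (1/(2A_{n0}))·log(2π) ]. -/

import Mathlib

open Complex Finset Real

/-- The completed zeta function `2ξ(x) := x(x-1)·π^(-x/2)·Γ(x/2)·ζ(x)`. -/
noncomputable def twoXi (x : ℂ) : ℂ :=
  x * (x - 1) * (Real.pi : ℂ) ^ (-x / 2) * Complex.Gamma (x / 2) * riemannZeta x

/-- The coefficient `A_{nm} := Γ(n+m+1/2) / ((2m-1)·(n-m)!·m!·Γ(m+1/2))`. -/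
noncomputable def Acoef (n m : ℕ) : ℝ :=
  Real.Gamma ((n : ℝ) + m + 1 / 2) /
    ((2 * (m : ℝ) - 1) * (Nat.factorial (n - m) : ℝ) * (Nat.factorial m : ℝ) *
      Real.Gamma ((m : ℝ) + 1 / 2))

/-- The discretized Keiper coefficient
`Λ_n := (-1)^n · Σ_{m=1}^n (-1)^m · A_{nm} · log(2ξ(2m))` (real logarithm). -/
noncomputable def LambdaSeq (n : ℕ) : ℝ :=
  (-1 : ℝ) ^ n * ∑ m ∈ Finset.Icc 1 n, (-1 : ℝ) ^ m * Acoef n m *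
    Real.log ((twoXi (2 * m)).re)

/-- The odd double factorial `(2m-3)!! = 2^(m-1)·Γ(m-1/2)/√π` (for `m ≥ 1`),
with the convention `(-1)!! = 1`. -/
noncomputable def oddDFac (m : ℕ) : ℝ :=
  2 ^ ((m : ℤ) - 1) * Real.Gamma ((m : ℝ) - 1 / 2) / Real.sqrt Real.pi

/-- The sequence `u_n := (-1)^n·[Σ_{m=1}^n (-1)^m·A_{nm}·log(|B_{2m}|/(2m-3)!!)
+ (1/(2A_{n0}))·log(2π)]`. -/
noncomputable def uSeq (n : ℕ) : ℝ :=
  (-1 : ℝ) ^ n * ((∑ m ∈ Finset.Icc 1 n, (-1 : ℝ) ^ m * Acoef n m *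
      Real.log (|(bernoulli (2 * m) : ℝ)| / oddDFac m)) +
    1 / (2 * Acoef n 0) * Real.log (2 * Real.pi))

open scoped Nat

/-! Euler's formula for `ζ(2m)` gives `2ξ(2m) = (2π)^m |B_{2m}| / (2m-3)!!`, so after taking
logarithms the theorem is the binomial identity
`∑_{m=1}^n (-1)^m m A_{nm} = (-1)^n / 2 + 1 / (2 A_{n0})`.
Since `n! A_{nm} = C(n,m) (m+1/2)_n / (2m-1)` and `m / (2m-1) = 1/2 + 1 / (4 (m-1/2))`, the left
side splits into two alternating binomial sums. The first is an `n`-th forward difference of a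
monic polynomial of degree `n`, hence `(-1)^n n!`. For the second,
`∑ (-1)^m C(n,m) (m+a)_k / (m+b) = (a-b)_k n! / (b)_{n+1}` for `k ≤ n`: writing
`(m+a)_{k+1} = (m+a)_k ((m+b) + (a-b+k))` lowers `k` at the cost of a polynomial of degree
`k < n`, whose `n`-th difference vanishes, and the case `k = 0` is the `n`-th forward difference
of `x ↦ 1/x`. -/

section

open Polynomial

variable {R : Type*} [CommRing R]

theorem sum_range_neg_one_pow_mul_choose_mul_eq_fwdDiff (f : R → R) (n : ℕ) :
    ∑ m ∈ range (n + 1), (-1) ^ m * n.choose m * f m = (-1) ^ n * (fwdDiff 1)^[n] f 0 := by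
  rw [fwdDiff_iter_eq_sum_shift, mul_sum]
  refine sum_congr rfl fun m hm => ?_
  obtain ⟨d, rfl⟩ := Nat.exists_eq_add_of_le (Nat.lt_succ_iff.mp (mem_range.mp hm))
  simp only [Nat.add_sub_cancel_left, zero_add, nsmul_one, zsmul_eq_mul]
  push_cast
  have hd : ((-1 : R) ^ d) ^ 2 = 1 := by rw [← pow_mul, mul_comm, (even_two_mul d).neg_one_pow]
  linear_combination (-(-1 : R) ^ m * (m + d).choose m * f m) * hd

theorem Polynomial.sum_range_neg_one_pow_mul_choose_mul_eval {P : R[X]} {n : ℕ}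
    (hP : P.natDegree ≤ n) :
    ∑ m ∈ range (n + 1), (-1) ^ m * n.choose m * P.eval (m : R) =
      (-1) ^ n * n ! * P.coeff n := by
  refine (sum_range_neg_one_pow_mul_choose_mul_eq_fwdDiff (P.eval ·) n).trans ?_
  rcases hP.lt_or_eq with hlt | rfl
  · rw [fwdDiff_iter_eq_zero_of_degree_lt hlt, coeff_eq_zero_of_natDegree_lt hlt]
    simp
  · rw [fwdDiff_iter_degree_eq_factorial]
    simp only [Pi.smul_apply, Pi.natCast_apply, smul_eq_mul, leadingCoeff]
    ring

section

variable [IsDomain R]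

theorem natDegree_ascPochhammer_comp_X_add_C (k : ℕ) (a : R) :
    ((ascPochhammer R k).comp (X + C a)).natDegree = k := by
  rw [natDegree_comp, ascPochhammer_natDegree, natDegree_X_add_C, mul_one]

theorem sum_range_neg_one_pow_mul_choose_mul_ascPochhammer_of_lt {k n : ℕ} (hk : k < n) (a : R) :
    ∑ m ∈ range (n + 1), (-1) ^ m * n.choose m * (ascPochhammer R k).eval (m + a) = 0 := by
  have hP := natDegree_ascPochhammer_comp_X_add_C k a
  have h := sum_range_neg_one_pow_mul_choose_mul_eval (hP.trans_le hk.le)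
  rw [coeff_eq_zero_of_natDegree_lt (hP.trans_lt hk), mul_zero] at h
  simpa only [eval_comp, eval_add, eval_X, eval_C] using h

theorem sum_range_neg_one_pow_mul_choose_mul_ascPochhammer_self (n : ℕ) (a : R) :
    ∑ m ∈ range (n + 1), (-1) ^ m * n.choose m * (ascPochhammer R n).eval (m + a) =
      (-1) ^ n * n ! := by
  have hP := natDegree_ascPochhammer_comp_X_add_C n a
  have h := sum_range_neg_one_pow_mul_choose_mul_eval hP.le
  have hc : ((ascPochhammer R n).comp (X + C a)).coeff n = 1 := by
    simpa only [hP] using ((monic_ascPochhammer R n).comp_X_add_C a).coeff_natDegree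
  rw [hc, mul_one] at h
  simpa only [eval_comp, eval_add, eval_X, eval_C] using h

theorem ascPochhammer_eval_ne_zero {x : R} (hx : ∀ j : ℕ, x + j ≠ 0) (n : ℕ) :
    (ascPochhammer R n).eval x ≠ 0 := by
  rw [Ne, ascPochhammer_eval_eq_zero_iff]
  rintro ⟨j, -, hj⟩
  exact hx j (by rw [hj, add_neg_cancel])

end

section

variable {K : Type*} [Field K]

theorem fwdDiff_iter_inv (n : ℕ) {x : K} (hx : ∀ j : ℕ, x + j ≠ 0) :
    (fwdDiff 1)^[n] (·⁻¹) x = (-1) ^ n * n ! / (ascPochhammer K (n + 1)).eval x := by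
  induction n generalizing x with
  | zero => simp
  | succ n ih =>
    have hx1 : ∀ j : ℕ, x + 1 + j ≠ 0 := fun j => by
      rw [add_assoc, add_comm 1]; exact_mod_cast hx (j + 1)
    have hshift :
        (ascPochhammer K (n + 2)).eval x = x * (ascPochhammer K (n + 1)).eval (x + 1) := by
      rw [ascPochhammer_succ_left, eval_mul, eval_comp]; simp
    rw [Function.iterate_succ_apply', fwdDiff, ih hx1, ih hx, hshift]
    have h1 := ascPochhammer_eval_ne_zero hx1 (n + 1)
    have h2 := ascPochhammer_eval_ne_zero hx (n + 1)
    have h0 : x ≠ 0 := by simpa using hx 0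
    have hrec := ascPochhammer_succ_eval (n + 1) x
    rw [hshift] at hrec
    field_simp
    push_cast [Nat.factorial_succ] at hrec ⊢
    linear_combination (-(-1 : K) ^ n * n !) * hrec

theorem sum_range_neg_one_pow_mul_choose_div (n : ℕ) {b : K}
    (hb : ∀ j : ℕ, b + j ≠ 0) :
    ∑ m ∈ range (n + 1), (-1) ^ m * n.choose m * (m + b)⁻¹ =
      n ! / (ascPochhammer K (n + 1)).eval b := by
  rw [sum_range_neg_one_pow_mul_choose_mul_eq_fwdDiff (fun y => (y + b)⁻¹),
    fwdDiff_iter_comp_add, zero_add, fwdDiff_iter_inv n hb, ← mul_div_assoc, ← mul_assoc,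
    ← pow_add, Even.neg_one_pow ⟨n, rfl⟩, one_mul]

theorem sum_range_neg_one_pow_mul_choose_mul_ascPochhammer_div {k n : ℕ}
    (hk : k ≤ n) (a : K) {b : K} (hb : ∀ j : ℕ, b + j ≠ 0) :
    ∑ m ∈ range (n + 1), (-1) ^ m * n.choose m * ((ascPochhammer K k).eval (m + a) / (m + b)) =
      (ascPochhammer K k).eval (a - b) * n ! / (ascPochhammer K (n + 1)).eval b := by
  induction k with
  | zero => simpa [div_eq_mul_inv] using sum_range_neg_one_pow_mul_choose_div n hb
  | succ k ih =>
    have hsplit : ∀ m : ℕ, (ascPochhammer K (k + 1)).eval (m + a) / (m + b) =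
        (ascPochhammer K k).eval (m + a) +
          (a - b + k) * ((ascPochhammer K k).eval (m + a) / (m + b)) := by
      intro m
      have : (m : K) + b ≠ 0 := add_comm b m ▸ hb m
      rw [ascPochhammer_succ_eval]
      field_simp
      ring
    simp_rw [hsplit, mul_add, sum_add_distrib,
      sum_range_neg_one_pow_mul_choose_mul_ascPochhammer_of_lt hk a, zero_add]
    simp_rw [mul_left_comm _ (a - b + k), ← mul_sum, ih (by omega), ascPochhammer_succ_eval]
    ring

end

theorem Real.Gamma_add_nat_eq_ascPochhammer_mul {x : ℝ} (hx : ∀ j : ℕ, x + j ≠ 0) (n : ℕ) :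
    Real.Gamma (x + n) = (ascPochhammer ℝ n).eval x * Real.Gamma x := by
  induction n with
  | zero => simp
  | succ n ih =>
    push_cast
    rw [← add_assoc, Real.Gamma_add_one (hx n), ih, ascPochhammer_succ_eval]
    ring

theorem Acoef_eq_choose_mul_ascPochhammer {n m : ℕ} (hm : m ≤ n) :
    Acoef n m =
      n.choose m * (ascPochhammer ℝ n).eval ((m : ℝ) + 1 / 2) / ((2 * m - 1) * n !) := by
  have hΓ : Real.Gamma (m + 1 / 2) ≠ 0 := (Real.Gamma_pos_of_pos (by positivity)).ne'
  unfold Acoef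
  rw [show (n : ℝ) + m + 1 / 2 = (m + 1 / 2) + n by ring,
    Real.Gamma_add_nat_eq_ascPochhammer_mul (fun j => by positivity), Nat.cast_choose ℝ hm]
  field_simp

theorem sum_Icc_neg_one_pow_mul_Acoef_mul_natCast (n : ℕ) :
    ∑ m ∈ Icc 1 n, (-1 : ℝ) ^ m * Acoef n m * m = (-1) ^ n / 2 + 1 / (2 * Acoef n 0) := by
  have hhalf : ∀ j : ℕ, -(1 / 2 : ℝ) + j ≠ 0 := fun j h => by
    have : (2 * j : ℝ) = 1 := by linarith
    norm_cast at this
    omega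
  have hP : (ascPochhammer ℝ n).eval (1 / 2) ≠ 0 := (ascPochhammer_pos n _ (by norm_num)).ne'
  have hP' : (ascPochhammer ℝ (n + 1)).eval (-(1 / 2)) =
      -(1 / 2) * (ascPochhammer ℝ n).eval (1 / 2) := by
    rw [ascPochhammer_succ_left, eval_mul, eval_comp]
    norm_num
  have hA0 : Acoef n 0 = -(ascPochhammer ℝ n).eval (1 / 2) / n ! := by
    rw [Acoef_eq_choose_mul_ascPochhammer (Nat.zero_le n)]
    simp [neg_div, div_neg]
  have hterm : ∀ m ∈ range (n + 1), (-1 : ℝ) ^ m * Acoef n m * m =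
      ((-1) ^ m * n.choose m * (ascPochhammer ℝ n).eval ((m : ℝ) + 1 / 2) / 2 +
        (-1) ^ m * n.choose m *
          ((ascPochhammer ℝ n).eval ((m : ℝ) + 1 / 2) / (m + -(1 / 2))) / 4) / n ! := by
    intro m hm
    rw [Acoef_eq_choose_mul_ascPochhammer (Nat.lt_succ_iff.mp (mem_range.mp hm))]
    have h1 : (m : ℝ) * 2 - 1 ≠ 0 := fun h => hhalf m (by linarith)
    rw [show (2 * m - 1 : ℝ) = m * 2 - 1 by ring,
      show (m + -(1 / 2) : ℝ) = (m * 2 - 1) / 2 by ring]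
    field_simp
    ring
  have hrange : ∑ m ∈ Icc 1 n, (-1 : ℝ) ^ m * Acoef n m * m =
      ∑ m ∈ range (n + 1), (-1 : ℝ) ^ m * Acoef n m * m := by
    refine sum_subset (fun m hm => ?_) (fun m hm hm' => ?_)
    · simp only [mem_Icc, mem_range] at hm ⊢
      omega
    · obtain rfl : m = 0 := by simp only [mem_Icc, mem_range] at hm hm'; omega
      simp
  rw [hrange, sum_congr rfl hterm, ← sum_div, sum_add_distrib, ← sum_div, ← sum_div,
    sum_range_neg_one_pow_mul_choose_mul_ascPochhammer_self,
    sum_range_neg_one_pow_mul_choose_mul_ascPochhammer_div le_rfl _ hhalf, hP', hA0]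
  norm_num
  field_simp
  ring

end

theorem oddDFac_succ (k : ℕ) : oddDFac (k + 1) = (2 * k - 1 : ℕ)‼ := by
  unfold oddDFac
  have hπ : Real.sqrt π ≠ 0 := (Real.sqrt_pos.mpr Real.pi_pos).ne'
  rw [show ((k + 1 : ℕ) : ℤ) - 1 = k by push_cast; ring, zpow_natCast,
    show ((k + 1 : ℕ) : ℝ) - 1 / 2 = k + 1 / 2 by push_cast; ring, Real.Gamma_nat_add_half]
  field_simp

theorem bernoulli_two_mul_ne_zero {m : ℕ} (hm : m ≠ 0) : bernoulli (2 * m) ≠ 0 := by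
  intro h
  apply riemannZeta_ne_zero_of_one_lt_re (s := 2 * m)
  · norm_cast
    omega
  · simp [riemannZeta_two_mul_nat hm, h]

theorem twoXi_two_mul_nat {m : ℕ} (hm : m ≠ 0) :
    twoXi (2 * m) = ((-1) ^ (m + 1) * (2 * π) ^ m * bernoulli (2 * m) / oddDFac m : ℝ) := by
  obtain ⟨k, rfl⟩ := Nat.exists_eq_add_one_of_ne_zero hm
  have hfac : (2 * (k + 1)) ! = 2 ^ (k + 1) * (k + 1) ! * ((2 * k + 1) * (2 * k - 1)‼) := by
    rw [show 2 * (k + 1) = (2 * k + 1) + 1 by ring, Nat.factorial_eq_mul_doubleFactorial,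
      show 2 * k + 1 + 1 = 2 * (k + 1) by ring, Nat.doubleFactorial_two_mul,
      Nat.doubleFactorial_add_one]
  have hπ : ((π : ℂ) ^ (-(2 * ((k + 1 : ℕ) : ℂ)) / 2)) = ((π : ℂ) ^ (k + 1))⁻¹ := by
    rw [show -(2 * ((k + 1 : ℕ) : ℂ)) / 2 = -((k + 1 : ℕ) : ℂ) by ring, cpow_neg,
      cpow_natCast]
  have hΓ : Complex.Gamma (2 * ((k + 1 : ℕ) : ℂ) / 2) = k ! := by
    rw [show 2 * ((k + 1 : ℕ) : ℂ) / 2 = k + 1 by push_cast; ring,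
      Complex.Gamma_nat_eq_factorial]
  unfold twoXi
  rw [riemannZeta_two_mul_nat hm, hπ, hΓ, oddDFac_succ, hfac, show 2 * (k + 1) - 1 = 2 * k + 1 by omega]
  have h1 : ((2 * k - 1)‼ : ℂ) ≠ 0 := Nat.cast_ne_zero.mpr (Nat.doubleFactorial_pos _).ne'
  have h2 : (k ! : ℂ) ≠ 0 := Nat.cast_ne_zero.mpr k.factorial_ne_zero
  have h3 : (2 * k + 1 : ℂ) ≠ 0 := by norm_cast
  have h4 : (π : ℂ) ≠ 0 := ofReal_ne_zero.mpr pi_ne_zero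
  push_cast [Nat.factorial_succ]
  field_simp
  ring

/-- `Real.log` only sees `|2ξ(2m)|`, so the sign of `B_{2m}` never has to be determined. -/
theorem log_twoXi_two_mul_nat {m : ℕ} (hm : m ≠ 0) :
    Real.log (twoXi (2 * m)).re =
      m * Real.log (2 * π) + Real.log (|(bernoulli (2 * m) : ℝ)| / oddDFac m) := by
  have hB : (bernoulli (2 * m) : ℝ) ≠ 0 := Rat.cast_ne_zero.mpr (bernoulli_two_mul_ne_zero hm)
  have hD : 0 < oddDFac m := by
    obtain ⟨k, rfl⟩ := Nat.exists_eq_add_one_of_ne_zero hm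
    rw [oddDFac_succ]
    exact_mod_cast Nat.doubleFactorial_pos _
  rw [twoXi_two_mul_nat hm, ofReal_re, ← Real.log_abs, abs_div, abs_mul, abs_mul, abs_pow,
    abs_neg, abs_one, one_pow, one_mul, abs_of_pos hD,
    abs_of_pos (by positivity : 0 < (2 * π) ^ m), mul_div_assoc,
    Real.log_mul (by positivity) (by positivity), Real.log_pow]

theorem stmt_8_general (n : ℕ) :
    LambdaSeq n = 1 / 2 * Real.log (2 * Real.pi) + uSeq n := by
  have hsplit : ∑ m ∈ Icc 1 n, (-1 : ℝ) ^ m * Acoef n m * Real.log (twoXi (2 * m)).re =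
      (∑ m ∈ Icc 1 n, (-1 : ℝ) ^ m * Acoef n m * m) * Real.log (2 * π) +
        ∑ m ∈ Icc 1 n,
          (-1 : ℝ) ^ m * Acoef n m * Real.log (|(bernoulli (2 * m) : ℝ)| / oddDFac m) := by
    rw [sum_mul, ← sum_add_distrib]
    refine sum_congr rfl fun m hm => ?_
    rw [log_twoXi_two_mul_nat (by simp only [mem_Icc] at hm; omega)]
    ring
  have hsq : ((-1 : ℝ) ^ n) ^ 2 = 1 := by rw [← pow_mul, mul_comm, (even_two_mul n).neg_one_pow]
  rw [LambdaSeq, uSeq, hsplit, sum_Icc_neg_one_pow_mul_Acoef_mul_natCast]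
  linear_combination (Real.log (2 * π) / 2) * hsq

/-- For every integer `n ≥ 1`, `Λ_n = (1/2)·log(2π) + u_n`. -/
theorem stmt_8 (n : ℕ) (hn : 1 ≤ n) :
    LambdaSeq n = 1 / 2 * Real.log (2 * Real.pi) + uSeq n :=
  stmt_8_general n
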